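/- For all k ∈ {1,2,3} and l ∈ {0,1}, the following identity holds in H: z^k·u·s·u·t^l = c·z^k·u·s·t^l + a·d·z^k·t^l + b·c·d·z^k·s⁻¹·u⁻¹·t^l + b·d²·z^{k−1}·s·t·u²·s·t^{l+1}. -/

import Mathlib

noncomputable section

open scoped TensorProduct

/-- The Laurent polynomial ring `ℤ[a, b, b⁻¹, c, d, d⁻¹]`, realised as the monoid algebra of
`ℕ × ℕ × ℤ × ℤ` over `ℤ`; the four coordinates record the exponents of `a`, `c`, `b`, `d`
respectively (`b` and `d` are invertible, so their exponents range over all of `ℤ`). -/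
abbrev Rr : Type := AddMonoidAlgebra ℤ (ℕ × ℕ × ℤ × ℤ)

namespace G13

/-- The indeterminate `a`. -/
def pa : Rr := AddMonoidAlgebra.single (1, 0, 0, 0) 1
/-- The indeterminate `c`. -/
def pc : Rr := AddMonoidAlgebra.single (0, 1, 0, 0) 1
/-- The invertible indeterminate `b`. -/
def pb : Rr := AddMonoidAlgebra.single (0, 0, 1, 0) 1
/-- The invertible indeterminate `d`. -/
def pd : Rr := AddMonoidAlgebra.single (0, 0, 0, 1) 1
/-- `b⁻¹`. -/
def pbInv : Rr := AddMonoidAlgebra.single (0, 0, -1, 0) 1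
/-- `d⁻¹`. -/
def pdInv : Rr := AddMonoidAlgebra.single (0, 0, 0, -1) 1

def fS : FreeAlgebra Rr (Fin 3) := FreeAlgebra.ι Rr 0
def fT : FreeAlgebra Rr (Fin 3) := FreeAlgebra.ι Rr 1
def fU : FreeAlgebra Rr (Fin 3) := FreeAlgebra.ι Rr 2

/-- The defining relations of the generic Hecke algebra of `G₁₃`:
`tust = ustu`, `stust = ustus`, `s² = a·s + b`, `t² = c·t + d`, `u² = c·u + d`. -/
inductive Rel : FreeAlgebra Rr (Fin 3) → FreeAlgebra Rr (Fin 3) → Prop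
  | braid1 : Rel (fT * fU * fS * fT) (fU * fS * fT * fU)
  | braid2 : Rel (fS * fT * fU * fS * fT) (fU * fS * fT * fU * fS)
  | relS : Rel (fS * fS)
      (algebraMap Rr (FreeAlgebra Rr (Fin 3)) pa * fS + algebraMap Rr (FreeAlgebra Rr (Fin 3)) pb)
  | relT : Rel (fT * fT)
      (algebraMap Rr (FreeAlgebra Rr (Fin 3)) pc * fT + algebraMap Rr (FreeAlgebra Rr (Fin 3)) pd)
  | relU : Rel (fU * fU)
      (algebraMap Rr (FreeAlgebra Rr (Fin 3)) pc * fU + algebraMap Rr (FreeAlgebra Rr (Fin 3)) pd)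

/-- The generic Hecke algebra of `G₁₃`. -/
abbrev H := RingQuot Rel

/-- The generator `s` of `H`. -/
def s : H := RingQuot.mkAlgHom Rr Rel fS
/-- The generator `t` of `H`. -/
def t : H := RingQuot.mkAlgHom Rr Rel fT
/-- The generator `u` of `H`. -/
def u : H := RingQuot.mkAlgHom Rr Rel fU

/-- The central element `z = (stu)³`. -/
def z : H := (s * t * u) ^ 3

/-- Scalars of `Rr` viewed inside `H`. -/
def sc : Rr → H := algebraMap Rr H

/-- The twelve elements `E₁, …, E₁₂`: `1, u, s, ts, su, us, tu, tsu, tus, sts, stu, uts`. -/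
def E : Fin 12 → H :=
  ![1, u, s, t * s, s * u, u * s, t * u, t * s * u, t * u * s, s * t * s, s * t * u, u * t * s]

/-- The family `B₁₃ = (b₁, …, b₉₆)`, indexed here by `Fin 96` (so `B i = b_{i+1}`):
`b_{24k+12l+m} = z^k · E_m · t^l` for `k ∈ {0,…,3}`, `l ∈ {0,1}`, `m ∈ {1,…,12}`. -/
def B : Fin 96 → H := fun i =>
  z ^ (i.val / 24) * E ⟨i.val % 12, by omega⟩ * t ^ (i.val / 12 % 2)

/-- The inverse of the generator `s`: `s⁻¹ = b⁻¹·s − a·b⁻¹·1`. -/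
def sInv : H := sc pbInv * s - sc (pa * pbInv)
/-- The inverse of the generator `t`: `t⁻¹ = d⁻¹·t − c·d⁻¹·1`. -/
def tInv : H := sc pdInv * t - sc (pc * pdInv)
/-- The inverse of the generator `u`: `u⁻¹ = d⁻¹·u − c·d⁻¹·1`. -/
def uInv : H := sc pdInv * u - sc (pc * pdInv)

/-- Integer powers of `t`: `tP n = tⁿ` for `n ≥ 0`, and `tP n = (t⁻¹)^(−n)` for `n < 0`. -/
def tP : ℤ → H := fun n => if 0 ≤ n then t ^ n.toNat else tInv ^ (-n).toNat

end G13

/-!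
Substituting `u = d·u⁻¹ + c` and `s = b·s⁻¹ + a` (the quadratic relations) into `usu` gives
`usu = c·us + ad + bcd·s⁻¹u⁻¹ + bd²·u⁻¹s⁻¹u⁻¹`. Multiplied on the left by `z^k`, the last term
becomes `z^{k-1}·(z u⁻¹s⁻¹u⁻¹)`, and the braid relation `stust = ustus` turns
`z u⁻¹s⁻¹u⁻¹ = stu·stust·u·u⁻¹s⁻¹u⁻¹` into `stu²st`.
-/

theorem AddMonoidAlgebra.single_one_mul_single_one_of_add_eq_zero {k G : Type*} [Semiring k]
    [AddMonoid G] {g g' : G} (h : g + g' = 0) :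
    (AddMonoidAlgebra.single g 1 : AddMonoidAlgebra k G) * AddMonoidAlgebra.single g' 1 = 1 := by
  rw [AddMonoidAlgebra.single_mul_single, h, one_mul, AddMonoidAlgebra.one_def]

section QuadraticRelation

variable {R A : Type*} [CommRing R] [Ring A] [Algebra R A]

theorem mul_eq_one_of_mul_self_eq {x : A} {a b b' : R}
    (hx : x * x = algebraMap R A a * x + algebraMap R A b) (hb : b * b' = 1) :
    x * (algebraMap R A b' * x - algebraMap R A (a * b')) = 1 := by
  rw [mul_sub, Algebra.left_comm, hx, ← Algebra.commutes, mul_add, ← mul_assoc, ← map_mul,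
    ← map_mul, mul_comm b' a, mul_comm b' b, hb, map_one]
  abel

theorem eq_algebraMap_mul_add_algebraMap (x : A) {a b b' : R} (hb : b * b' = 1) :
    x = algebraMap R A b * (algebraMap R A b' * x - algebraMap R A (a * b')) +
      algebraMap R A a := by
  rw [mul_sub, ← mul_assoc, ← map_mul, ← map_mul, hb, map_one, one_mul, mul_left_comm, hb,
    mul_one, sub_add_cancel]

theorem mul_mul_self_eq_of_eq_algebraMap_mul_add {x y x' y' : A} {β γ δ ε : R}
    (hxx' : x * x' = 1) (hx : x = algebraMap R A β * x' + algebraMap R A γ)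
    (hy : y = algebraMap R A δ * y' + algebraMap R A ε) :
    x * y * x = algebraMap R A γ * (x * y) + algebraMap R A (ε * β) +
      algebraMap R A (δ * γ * β) * (y' * x') + algebraMap R A (δ * β ^ 2) * (x' * y' * x') := by
  simp only [← Algebra.smul_def] at hx hy ⊢
  simp only [Algebra.algebraMap_eq_smul_one] at hx hy ⊢
  have hxyx : x * y * x = β • (x * y * x') + γ • (x * y) := by
    calc x * y * x = x * y * (β • x' + γ • 1) := by rw [← hx]
      _ = _ := by simp only [mul_add, mul_smul_comm, mul_one]
  have hxyx' : x * y * x' = δ • (x * y' * x') + ε • 1 := by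
    rw [hy]
    simp only [mul_add, add_mul, mul_smul_comm, smul_mul_assoc, mul_one, hxx']
  have hxy'x' : x * y' * x' = β • (x' * y' * x') + γ • (y' * x') := by
    calc x * y' * x' = (β • x' + γ • 1) * y' * x' := by rw [← hx]
      _ = _ := by simp only [add_mul, smul_mul_assoc, one_mul, mul_assoc]
  rw [hxyx, hxyx', hxy'x']
  module

end QuadraticRelation

namespace G13

theorem s_mul_s : s * s = sc pa * s + sc pb := by
  simpa only [map_mul, map_add, AlgHom.commutes, s, sc] using
    RingQuot.mkAlgHom_rel Rr Rel.relS

theorem u_mul_u : u * u = sc pc * u + sc pd := by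
  simpa only [map_mul, map_add, AlgHom.commutes, u, sc] using
    RingQuot.mkAlgHom_rel Rr Rel.relU

theorem s_mul_t_mul_u_mul_s_mul_t : s * t * u * s * t = u * s * t * u * s := by
  simpa only [map_mul, s, t, u] using RingQuot.mkAlgHom_rel Rr Rel.braid2

theorem pb_mul_pbInv : pb * pbInv = 1 :=
  AddMonoidAlgebra.single_one_mul_single_one_of_add_eq_zero (by decide)

theorem pd_mul_pdInv : pd * pdInv = 1 :=
  AddMonoidAlgebra.single_one_mul_single_one_of_add_eq_zero (by decide)

theorem s_mul_sInv : s * sInv = 1 :=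
  mul_eq_one_of_mul_self_eq (A := H) s_mul_s pb_mul_pbInv

theorem u_mul_uInv : u * uInv = 1 :=
  mul_eq_one_of_mul_self_eq (A := H) u_mul_u pd_mul_pdInv

theorem u_mul_s_mul_u : u * s * u = sc pc * (u * s) + sc (pa * pd) +
    sc (pb * pc * pd) * (sInv * uInv) + sc (pb * pd ^ 2) * (uInv * sInv * uInv) :=
  mul_mul_self_eq_of_eq_algebraMap_mul_add u_mul_uInv
    (eq_algebraMap_mul_add_algebraMap u pd_mul_pdInv)
    (eq_algebraMap_mul_add_algebraMap s pb_mul_pbInv)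

theorem z_mul_uInv_mul_sInv_mul_uInv : z * (uInv * sInv * uInv) = s * t * u ^ 2 * s * t :=
  calc z * (uInv * sInv * uInv)
      _ = s * t * u * (s * t * u * s * t) * (u * uInv) * sInv * uInv := by rw [z]; noncomm_ring
      _ = s * t * u * (u * s * t * u) * (s * sInv) * uInv := by
        rw [s_mul_t_mul_u_mul_s_mul_t, u_mul_uInv]; noncomm_ring
      _ = s * t * u * (u * s * t) * (u * uInv) := by rw [s_mul_sInv]; noncomm_ring
      _ = s * t * u ^ 2 * s * t := by rw [u_mul_uInv]; noncomm_ring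

theorem z_pow_succ_mul_u_mul_s_mul_u (k : ℕ) (w : H) :
    z ^ (k + 1) * u * s * u * w =
      sc pc * (z ^ (k + 1) * u * s * w) + sc (pa * pd) * (z ^ (k + 1) * w) +
        sc (pb * pc * pd) * (z ^ (k + 1) * sInv * uInv * w) +
        sc (pb * pd ^ 2) * (z ^ k * s * t * u ^ 2 * s * (t * w)) := by
  calc z ^ (k + 1) * u * s * u * w = z ^ k * (z * (u * s * u)) * w := by
        rw [pow_succ]; noncomm_ring
    _ = _ := by
        simp only [u_mul_s_mul_u, sc, ← Algebra.smul_def]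
        simp only [mul_add, add_mul, mul_smul_comm, smul_mul_assoc, Algebra.algebraMap_eq_smul_one,
          mul_one, z_mul_uInv_mul_sInv_mul_uInv]
        simp only [pow_succ, mul_assoc]

theorem tP_add_one {l : ℤ} (hl : 0 ≤ l) : tP (l + 1) = t * tP l := by
  rw [tP, tP, if_pos hl, if_pos (by omega), Int.toNat_add hl zero_le_one, Int.toNat_one, pow_succ']

/-- **special case 14.** For `k ∈ {1,2,3}`, `l ∈ {0,1}`:
`z^k·usu·t^l = c·z^k·us·t^l + ad·z^k·t^l + bcd·z^k·s⁻¹u⁻¹·t^l + bd²·z^{k−1}·stu²s·t^{l+1}`. -/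
theorem stmt12 : ∀ k ∈ ({1, 2, 3} : Set ℕ), ∀ l ∈ ({0, 1} : Set ℤ),
    z ^ k * u * s * u * tP l =
      sc pc * (z ^ k * u * s * tP l) + sc (pa * pd) * (z ^ k * tP l) +
        sc (pb * pc * pd) * (z ^ k * sInv * uInv * tP l) +
        sc (pb * pd ^ 2) * (z ^ (k - 1) * s * t * u ^ 2 * s * tP (l + 1)) := by
  intro k hk l hl
  obtain ⟨k, rfl⟩ : ∃ m, k = m + 1 := ⟨k - 1, by rcases hk with rfl | rfl | rfl <;> rfl⟩
  have hl : 0 ≤ l := by rcases hl with rfl | rfl <;> decide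
  rw [tP_add_one hl, Nat.add_sub_cancel]
  exact z_pow_succ_mul_u_mul_s_mul_u k (tP l)

end G13
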